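/- Frame the hypotheses of Corollary 1. Define F̄_j = {S ∈ F : max_{u∈S} ||a_u − w_j||_1 ≤ 8μ}. Then F = F̄_1 ∪ ⋯ ∪ F̄_r, and moreover for distinct x, y ∈ R, any S_x ∈ F̄_x and S_y ∈ F̄_y are disjoint as subsets of N. -/

import Mathlib

noncomputable section
open Matrix
open scoped Classical

/-- Entrywise L1 norm of a vector. -/
def l1 {α : Type*} [Fintype α] (v : α → ℝ) : ℝ := ∑ i, |v i|

/-- Induced L1 norm of a matrix (maximum column sum of absolute values). -/
def ml1 {α β : Type*} [Fintype α] [Fintype β] (M : Matrix α β ℝ) : ℝ :=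
  sSup (Set.range fun j => ∑ i, |M i j|)

/-- Feasible set of problem P(A,r). -/
def Feas {ι : Type*} [Fintype ι] [DecidableEq ι] (X : Matrix ι ι ℝ) (r : ℕ) : Prop :=
  Matrix.trace X = (r : ℝ) ∧ (∀ i, X i i ≤ 1) ∧ (∀ i j, 0 ≤ X i j) ∧
    (∀ i j, X i j ≤ X i i)

/-- κ(W) = min over j of min over nonnegative z (supported off j) of
    ‖w_j − W(:,R∖{j}) z‖₁. -/
def kappa {d r : ℕ} (W : Matrix (Fin d) (Fin r) ℝ) : ℝ :=
  sInf {c | ∃ (j : Fin r) (z : Fin r → ℝ), (∀ k, 0 ≤ z k) ∧ z j = 0 ∧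
    c = l1 (fun i => W i j - ∑ k, W i k * z k)}

/-- ω(W) = min over distinct pairs of ‖w_{j₁} − w_{j₂}‖₁. -/
def omegaW {d r : ℕ} (W : Matrix (Fin d) (Fin r) ℝ) : ℝ :=
  sInf {c | ∃ j₁ j₂ : Fin r, j₁ ≠ j₂ ∧ c = l1 (fun i => W i j₁ - W i j₂)}

/-- β = maximum entry of H̄. -/
def betaH {r m : ℕ} (Hb : Matrix (Fin r) (Fin m) ℝ) : ℝ :=
  sSup (Set.range fun p : Fin r × Fin m => Hb p.1 p.2)

/-- L1 distance between columns i and u of A. -/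
def cdist {d : ℕ} {ι : Type*} [Fintype ι] (A : Matrix (Fin d) ι ℝ) (i u : ι) : ℝ :=
  l1 (fun k => A k i - A k u)

/-- Ω_i : the nested family of clusters built from index i by ordering the columns
    of A by L1 distance to a_i (prefixes of such an ordering). -/
def OmegaC {d : ℕ} {ι : Type*} [Fintype ι] (A : Matrix (Fin d) ι ℝ) (i : ι) :
    Set (Finset ι) :=
  {S | i ∈ S ∧ ∀ u ∈ S, ∀ v, v ∉ S → cdist A i u ≤ cdist A i v}

/-- diameter of a cluster S in Ω_i. -/
def diamC {d : ℕ} {ι : Type*} [Fintype ι] (A : Matrix (Fin d) ι ℝ) (i : ι)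
    (S : Finset ι) : ℝ :=
  sSup {x | ∃ u ∈ S, x = cdist A i u}

/-- score of a cluster with respect to a point list. -/
def scoreS {ι : Type*} (S : Finset ι) (p : ι → ℝ) : ℝ := ∑ u ∈ S, p u

/-- F_i(q). -/
def FsetC {d : ℕ} {ι : Type*} [Fintype ι] (A : Matrix (Fin d) ι ℝ) (μ : ℝ) (r : ℕ)
    (q : ι → ℝ) (i : ι) : Set (Finset ι) :=
  {S | S ∈ OmegaC A i ∧ diamC A i S ≤ 3 * μ ∧ (r : ℝ) / (r + 1) < scoreS S q}

/-- G_i(q). -/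
def GsetC {d : ℕ} {ι : Type*} [Fintype ι] (A : Matrix (Fin d) ι ℝ) (r : ℕ)
    (q : ι → ℝ) (i : ι) : Set (Finset ι) :=
  {S | S ∈ OmegaC A i ∧ (r : ℝ) / (r + 1) < scoreS S q}

/-- F̄_j : clusters of F all of whose columns are within 8μ of w_j. -/
def FbarC {d r m : ℕ} (A : Matrix (Fin d) (Fin r ⊕ Fin m) ℝ)
    (W : Matrix (Fin d) (Fin r) ℝ) (μ : ℝ) (q : Fin r ⊕ Fin m → ℝ) (j : Fin r) :
    Set (Finset (Fin r ⊕ Fin m)) :=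
  {S | (∃ i, S ∈ FsetC A μ r q i) ∧ ∀ u ∈ S, l1 (fun k => A k u - W k j) ≤ 8 * μ}

/-!
The optimal value of `P(A, r)` is at most `2ε`: the feasible point `pureSolution` that copies
the rows of `H` onto the pure columns already achieves it. For the optimum `X` and a pure
column `v = π j`, the vector `y = H X(:, v)` then satisfies `‖w_j - W y‖₁ ≤ 17ε/4`, so the
definition of `κ` forces `y_j ≥ 1 - 17ε/(4κ)`. Since `y_j` can only be large through columns
with `H j u ≥ 1 - μ/2`, the diagonal of `X` has mass at least `r/(r+1)` on this anchor of
`w_j`; the `r` anchors are disjoint and `trace X = r`, so at most `r/(r+1)` lies outside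
them. Hence every cluster of `F`, having score above `r/(r+1)`, meets some anchor, and its
`3μ`-diameter keeps all of it within `8μ` of that `w_j`. A column shared by clusters of two
components would put `w_x` and `w_y` within `16μ < ω` of each other.
-/

lemma sum_mul_le_add_sum_filter {ι : Type*} (s : Finset ι) {h x : ι → ℝ} (hh : ∀ u, h u ≤ 1)
    (hx : ∀ u, 0 ≤ x u) (θ : ℝ) :
    ∑ u ∈ s, h u * x u ≤ θ * ∑ u ∈ s with 1 - θ ≤ h u, x u + (1 - θ) * ∑ u ∈ s, x u := by
  rw [Finset.mul_sum, Finset.mul_sum, Finset.sum_filter, ← Finset.sum_add_distrib]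
  refine Finset.sum_le_sum fun u _ => ?_
  split_ifs with hu
  · nlinarith [hh u, hx u]
  · nlinarith [hx u]

section L1

variable {α : Type*} [Fintype α]

lemma l1_nonneg (v : α → ℝ) : 0 ≤ l1 v :=
  Finset.sum_nonneg fun _ _ => abs_nonneg _

lemma l1_neg (v : α → ℝ) : l1 (fun i => -v i) = l1 v := by
  simp only [l1, abs_neg]

lemma l1_add_le (f g : α → ℝ) : l1 (fun i => f i + g i) ≤ l1 f + l1 g := by
  rw [l1, l1, l1, ← Finset.sum_add_distrib]
  exact Finset.sum_le_sum fun i _ => abs_add_le _ _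

lemma l1_sub_comm (f g : α → ℝ) : l1 (fun i => f i - g i) = l1 (fun i => g i - f i) := by
  simp only [l1, abs_sub_comm]

lemma l1_sub_le_sub_add_sub (f g h : α → ℝ) :
    l1 (fun i => f i - h i) ≤ l1 (fun i => f i - g i) + l1 (fun i => g i - h i) := by
  simpa using l1_add_le (fun i => f i - g i) (fun i => g i - h i)

lemma l1_const_mul {t : ℝ} (ht : 0 ≤ t) (f : α → ℝ) : l1 (fun i => t * f i) = t * l1 f := by
  simp only [l1, abs_mul, abs_of_nonneg ht, Finset.mul_sum]

lemma l1_of_nonneg {v : α → ℝ} (hv : ∀ i, 0 ≤ v i) : l1 v = ∑ i, v i :=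
  Finset.sum_congr rfl fun i _ => abs_of_nonneg (hv i)

variable {β : Type*} [Fintype β]

lemma l1_mulVec_le (M : Matrix α β ℝ) (c : β → ℝ) :
    l1 (M *ᵥ c) ≤ ∑ k, |c k| * l1 (fun i => M i k) := by
  calc l1 (M *ᵥ c) ≤ ∑ i, ∑ k, |M i k * c k| :=
        Finset.sum_le_sum fun i _ => Finset.abs_sum_le_sum_abs _ _
    _ = ∑ k, |c k| * l1 (fun i => M i k) := by
        rw [Finset.sum_comm]; simp only [l1, abs_mul, Finset.mul_sum, mul_comm]

lemma l1_mulVec_le_of_l1_col_le {M : Matrix α β ℝ} {ε : ℝ} (hM : ∀ k, l1 (fun i => M i k) ≤ ε)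
    {c : β → ℝ} (hc : ∀ k, 0 ≤ c k) : l1 (M *ᵥ c) ≤ ε * ∑ k, c k :=
  (l1_mulVec_le M c).trans <| by
    rw [Finset.mul_sum]
    exact Finset.sum_le_sum fun k _ => by
      rw [abs_of_nonneg (hc k), mul_comm]; exact mul_le_mul_of_nonneg_right (hM k) (hc k)

lemma l1_mulVec_of_nonneg {M : Matrix α β ℝ} (hM : ∀ i k, 0 ≤ M i k)
    (hcol : ∀ k, l1 (fun i => M i k) = 1) {c : β → ℝ} (hc : ∀ k, 0 ≤ c k) :
    l1 (M *ᵥ c) = ∑ k, c k := by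
  rw [l1_of_nonneg (v := M *ᵥ c) fun i => Finset.sum_nonneg fun k _ => mul_nonneg (hM i k) (hc k)]
  simp only [Matrix.mulVec, dotProduct]
  rw [Finset.sum_comm]
  refine Finset.sum_congr rfl fun k _ => ?_
  rw [← Finset.sum_mul, ← l1_of_nonneg (hM · k), hcol k, one_mul]

lemma l1_mulVec_sub_col_le [DecidableEq β] {M : Matrix α β ℝ} (hM : ∀ k, l1 (fun i => M i k) = 1)
    {y : β → ℝ} (hy : ∀ k, 0 ≤ y k) (hy1 : ∑ k, y k = 1) (j : β) :
    l1 (fun i => (M *ᵥ y) i - M i j) ≤ 2 * (1 - y j) := by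
  have hsub : (fun i => (M *ᵥ y) i - M i j) = M *ᵥ (y - Pi.single j 1) := by
    ext i; simp [Matrix.mulVec_sub, Matrix.mulVec_single]
  have hcoef : ∑ k, |y k - (Pi.single j 1 : β → ℝ) k| = 2 * (1 - y j) := by
    rw [← Finset.add_sum_erase _ _ (Finset.mem_univ j)] at hy1 ⊢
    have hrest : ∑ k ∈ Finset.univ.erase j, |y k - (Pi.single j 1 : β → ℝ) k| =
        ∑ k ∈ Finset.univ.erase j, y k :=
      Finset.sum_congr rfl fun k hk => by
        simp [Finset.ne_of_mem_erase hk, abs_of_nonneg (hy k)]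
    have hyj : y j ≤ 1 := by
      linarith [Finset.sum_nonneg fun k (_ : k ∈ Finset.univ.erase j) => hy k]
    rw [hrest, Pi.single_eq_same, abs_of_nonpos (sub_nonpos.2 hyj)]
    linarith
  rw [hsub]
  refine (l1_mulVec_le M _).trans (le_of_eq ?_)
  simpa [hM] using hcoef

end L1

lemma l1_col_le_ml1 {α β : Type*} [Fintype α] [Fintype β] (M : Matrix α β ℝ) (v : β) :
    l1 (fun i => M i v) ≤ ml1 M :=
  le_csSup (Set.finite_range _).bddAbove ⟨v, rfl⟩

lemma ml1_le {α β : Type*} [Fintype α] [Fintype β] [Nonempty β] {M : Matrix α β ℝ} {c : ℝ}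
    (h : ∀ v, l1 (fun i => M i v) ≤ c) : ml1 M ≤ c :=
  csSup_le (Set.range_nonempty _) (by rintro x ⟨v, rfl⟩; exact h v)

lemma ml1_nonneg {α β : Type*} [Fintype α] [Fintype β] (M : Matrix α β ℝ) : 0 ≤ ml1 M :=
  Real.sSup_nonneg (by rintro x ⟨v, rfl⟩; exact l1_nonneg _)

section Conditioning

variable {d r : ℕ} (W : Matrix (Fin d) (Fin r) ℝ)

lemma kappa_nonneg : 0 ≤ kappa W :=
  Real.sInf_nonneg (by rintro c ⟨j, z, _, _, rfl⟩; exact l1_nonneg _)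

lemma kappa_le {j : Fin r} {z : Fin r → ℝ} (hz : ∀ k, 0 ≤ z k) (hzj : z j = 0) :
    kappa W ≤ l1 (fun i => W i j - (W *ᵥ z) i) :=
  csInf_le ⟨0, by rintro c ⟨_, _, _, _, rfl⟩; exact l1_nonneg _⟩ ⟨j, z, hz, hzj, rfl⟩

lemma kappa_le_one (hW : ∀ j, l1 (fun i => W i j) = 1) (j : Fin r) : kappa W ≤ 1 := by
  simpa [hW j] using kappa_le W (j := j) (z := 0) (fun _ => le_rfl) rfl

lemma kappa_of_isEmpty (W : Matrix (Fin d) (Fin 0) ℝ) : kappa W = 0 := by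
  simp [kappa]

lemma kappa_le_l1_sub {j₁ j₂ : Fin r} (h : j₁ ≠ j₂) :
    kappa W ≤ l1 (fun i => W i j₁ - W i j₂) := by
  simpa [Matrix.mulVec, dotProduct, Pi.single_apply] using
    kappa_le W (j := j₁) (z := Pi.single j₂ 1)
      (fun k => by rw [Pi.single_apply]; split_ifs <;> norm_num)
      (Pi.single_eq_of_ne h _)

/-- With `y j = 1 - t` and the rest of `y` rescaled by `1 / t`, `w_j - W y = t (w_j - W z)`
for a `z` admissible in the definition of `κ`. -/
lemma kappa_mul_one_sub_le {y : Fin r → ℝ} (hy : ∀ k, 0 ≤ y k) (j : Fin r) :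
    kappa W * (1 - y j) ≤ l1 (fun i => W i j - (W *ᵥ y) i) := by
  rcases le_or_gt 1 (y j) with hyj | hyj
  · exact (mul_nonpos_of_nonneg_of_nonpos (kappa_nonneg W) (by linarith)).trans (l1_nonneg _)
  set t := 1 - y j with ht
  have ht0 : 0 < t := by linarith
  set z : Fin r → ℝ := fun k => Function.update y j 0 k / t
  have hz : ∀ k, 0 ≤ z k := fun k => div_nonneg
    (by rcases eq_or_ne k j with rfl | hk <;> simp [*]) ht0.le
  have hWy : ∀ i, W i j - (W *ᵥ y) i = t * (W i j - (W *ᵥ z) i) := by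
    intro i
    have : (W *ᵥ y) i = W i j * y j + t * (W *ᵥ z) i := by
      simp only [z, Matrix.mulVec, dotProduct, Finset.mul_sum, mul_div_assoc']
      rw [← Finset.add_sum_erase _ _ (Finset.mem_univ j),
        ← Finset.add_sum_erase _ _ (Finset.mem_univ j)]
      simp only [Function.update_self, mul_zero, zero_div, zero_add]
      congr 1
      refine Finset.sum_congr rfl fun k hk => ?_
      rw [Function.update_of_ne (Finset.ne_of_mem_erase hk)]
      field_simp
    rw [this, ht]; ring
  rw [show (fun i => W i j - (W *ᵥ y) i) = fun i => t * (W i j - (W *ᵥ z) i) from funext hWy,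
    l1_const_mul ht0.le, mul_comm]
  exact mul_le_mul_of_nonneg_left (kappa_le W hz (by simp [z])) ht0.le

lemma exists_ne_of_omegaW_pos (h : 0 < omegaW W) : ∃ j₁ j₂ : Fin r, j₁ ≠ j₂ := by
  by_contra! hc
  have : {c | ∃ j₁ j₂ : Fin r, j₁ ≠ j₂ ∧ c = l1 (fun i => W i j₁ - W i j₂)} = ∅ :=
    Set.eq_empty_of_forall_notMem fun c ⟨j₁, j₂, hne, _⟩ => hne (hc j₁ j₂)
  simp [omegaW, this] at h

lemma omegaW_le_l1_sub {j₁ j₂ : Fin r} (h : j₁ ≠ j₂) :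
    omegaW W ≤ l1 (fun i => W i j₁ - W i j₂) :=
  csInf_le ⟨0, by rintro c ⟨_, _, _, rfl⟩; exact l1_nonneg _⟩ ⟨j₁, j₂, h, rfl⟩

lemma kappa_le_omegaW {j₁ j₂ : Fin r} (hne : j₁ ≠ j₂) : kappa W ≤ omegaW W :=
  le_csInf ⟨_, j₁, j₂, hne, rfl⟩ fun _ ⟨_, _, hab, hc⟩ => hc ▸ kappa_le_l1_sub W hab

lemma omegaW_le_two (hW : ∀ j, l1 (fun i => W i j) = 1) {j₁ j₂ : Fin r} (hne : j₁ ≠ j₂) :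
    omegaW W ≤ 2 := by
  refine (omegaW_le_l1_sub W hne).trans ?_
  have := l1_add_le (fun i => W i j₁) (fun i => -W i j₂)
  rw [l1_neg, hW, hW] at this
  simpa [sub_eq_add_neg, one_add_one_eq_two] using this

end Conditioning

/-- Both parameter regimes of Corollary 1 give the bounds that the argument runs on. -/
lemma regime_bounds {κ ω ε μ R : ℝ} (hR : 2 ≤ R) (hε : 0 ≤ ε) (hκ0 : 0 ≤ κ) (hκ1 : κ ≤ 1)
    (hω : 0 < ω → κ ≤ ω ∧ ω ≤ 2)
    (hcase : (ε < κ * ω / (578 * R) ∧ ∃ ξ : ℝ, 0 < ξ ∧ ξ < κ / 35 ∧ μ = 17 * R * ε / κ + ξ) ∨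
      (ε < κ ^ 2 / (289 * R ^ 2) ∧ ∃ ξ : ℝ, 0 < ξ ∧ ξ < κ / 35 ∧ μ = Real.sqrt ε + ξ)) :
    0 < κ ∧ 17 * R * ε ≤ κ * μ ∧ ε ≤ μ ∧ 0 < μ ∧ μ < 1 ∧ (κ ≤ ω → 16 * μ < ω) := by
  suffices h : 0 < κ ∧ 17 * R * ε ≤ κ * μ ∧ 0 < μ ∧ μ < 1 ∧ (κ ≤ ω → 16 * μ < ω) by
    obtain ⟨hκ, hεμ, hμ0, hμ1, hω⟩ := h
    exact ⟨hκ, hεμ, by nlinarith, hμ0, hμ1, hω⟩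
  rcases hcase with ⟨hεκω, ξ, hξ, hξκ, rfl⟩ | ⟨hεκ, ξ, hξ, hξκ, rfl⟩
  · have hprod : 578 * R * ε < κ * ω := by rwa [lt_div_iff₀ (by positivity), mul_comm] at hεκω
    have hκ : 0 < κ := lt_of_le_of_ne hκ0 fun h => by simp [← h] at hprod; nlinarith
    have hω0 : 0 < ω := pos_of_mul_pos_right (hprod.trans_le' (by positivity)) hκ0
    obtain ⟨hκω, hω2⟩ := hω hω0
    have hfirst : 17 * R * ε / κ < ω / 34 := by rw [div_lt_iff₀ hκ]; linarith
    have hsecond : 0 ≤ 17 * R * ε / κ := by positivity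
    refine ⟨hκ, ?_, by linarith, by linarith, fun _ => by linarith⟩
    rw [mul_add, mul_div_cancel₀ _ hκ.ne']
    nlinarith
  · have hκ : 0 < κ := lt_of_le_of_ne hκ0 fun h => by simp [← h] at hεκ; linarith
    have hsqrt : Real.sqrt ε < κ / (17 * R) := by
      rw [Real.sqrt_lt' (by positivity), div_pow]
      convert hεκ using 2; ring
    have hsqrt34 : Real.sqrt ε < κ / 34 :=
      hsqrt.trans_le (div_le_div_of_nonneg_left hκ0 (by norm_num) (by linarith))
    have hsq : 17 * R * ε ≤ κ * Real.sqrt ε := by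
      have h := mul_le_mul_of_nonneg_left ((lt_div_iff₀ (by positivity)).1 hsqrt).le
        (Real.sqrt_nonneg ε)
      nlinarith [Real.mul_self_sqrt hε]
    have hs0 := Real.sqrt_nonneg ε
    refine ⟨hκ, hsq.trans (by nlinarith), by linarith, by linarith, fun h => by linarith⟩

lemma kappa_regime_bounds {d r : ℕ} {W : Matrix (Fin d) (Fin r) ℝ}
    (hW : ∀ j, l1 (fun i => W i j) = 1) {ε μ : ℝ} (hε : 0 ≤ ε)
    (hcase : (ε < kappa W * omegaW W / (578 * (r + 1)) ∧
        ∃ ξ : ℝ, 0 < ξ ∧ ξ < kappa W / 35 ∧ μ = 17 * (r + 1) * ε / kappa W + ξ) ∨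
      (ε < kappa W ^ 2 / (289 * (r + 1) ^ 2) ∧
        ∃ ξ : ℝ, 0 < ξ ∧ ξ < kappa W / 35 ∧ μ = Real.sqrt ε + ξ)) :
    0 < kappa W ∧ 17 * (r + 1) * ε ≤ kappa W * μ ∧ ε ≤ μ ∧ 0 < μ ∧ μ < 1 ∧
      ∀ x y : Fin r, x ≠ y → 16 * μ < l1 (fun i => W i x - W i y) := by
  obtain ⟨r, rfl⟩ : ∃ r', r = r' + 1 := by
    refine Nat.exists_eq_add_one.2 (Nat.pos_of_ne_zero ?_)
    rintro rfl
    rcases hcase with ⟨h, -⟩ | ⟨h, -⟩ <;> simp [kappa_of_isEmpty] at h <;> linarith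
  have hωW : 0 < omegaW W → kappa W ≤ omegaW W ∧ omegaW W ≤ 2 := fun h => by
    obtain ⟨j₁, j₂, hne⟩ := exists_ne_of_omegaW_pos W h
    exact ⟨kappa_le_omegaW W hne, omegaW_le_two W hW hne⟩
  obtain ⟨hκ, hεμ, hεμ', hμ0, hμ1, hω⟩ := regime_bounds (R := ((r + 1 : ℕ) : ℝ) + 1)
    (by push_cast; linarith [(r.cast_nonneg : (0 : ℝ) ≤ r)]) hε (kappa_nonneg W)
    (kappa_le_one W hW 0) hωW hcase
  exact ⟨hκ, hεμ, hεμ', hμ0, hμ1, fun x y hxy =>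
    (hω (kappa_le_omegaW W hxy)).trans_le (omegaW_le_l1_sub W hxy)⟩

lemma cdist_le_of_mem_FsetC {d r : ℕ} {ι : Type*} [Fintype ι] {A : Matrix (Fin d) ι ℝ} {μ : ℝ}
    {q : ι → ℝ} {i : ι} {S : Finset ι} (hS : S ∈ FsetC A μ r q i) {u : ι} (hu : u ∈ S) :
    cdist A i u ≤ 3 * μ := by
  have hbdd : BddAbove {x | ∃ u ∈ S, x = cdist A i u} :=
    ((S.finite_toSet.image (cdist A i)).subset <| by
      rintro x ⟨u, hu, rfl⟩; exact ⟨u, hu, rfl⟩).bddAbove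
  exact (le_csSup hbdd ⟨u, hu, rfl⟩).trans hS.2.1

section Separable

variable {d r : ℕ} {ι : Type*}

section Pure

variable [DecidableEq ι]

/-- The feasible point `Πᵀ [I H̄; 0 0] Π` of the paper: row `π j` is the `j`-th row of `H`. -/
def pureSolution (π : Fin r → ι) (H : Matrix (Fin r) ι ℝ) : Matrix ι ι ℝ :=
  (1 : Matrix ι ι ℝ).submatrix id π * H

lemma pureSolution_apply (π : Fin r → ι) (H : Matrix (Fin r) ι ℝ) (u v : ι) :
    pureSolution π H u v = ∑ j, if u = π j then H j v else 0 := by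
  simp [pureSolution, Matrix.mul_apply, Matrix.one_apply]

lemma mul_pureSolution [Fintype ι] {α : Type*} (A : Matrix α ι ℝ) (π : Fin r → ι)
    (H : Matrix (Fin r) ι ℝ) : A * pureSolution π H = A.submatrix id π * H := by
  rw [pureSolution, ← Matrix.mul_assoc]
  congr 1
  ext k j
  simp [Matrix.mul_apply, Matrix.one_apply]

end Pure

lemma submatrix_sub_mul_eq {A : Matrix (Fin d) ι ℝ} (W : Matrix (Fin d) (Fin r) ℝ)
    {H : Matrix (Fin r) ι ℝ} {π : Fin r → ι} (hπ : H.submatrix id π = 1) :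
    (A - W * H).submatrix id π = A.submatrix id π - W := by
  have hWH : (W * H).submatrix id π = W := by
    rw [Matrix.submatrix_mul _ _ _ _ _ Function.bijective_id, hπ, Matrix.submatrix_id_id,
      Matrix.mul_one]
  calc (A - W * H).submatrix id π = A.submatrix id π - (W * H).submatrix id π := rfl
    _ = A.submatrix id π - W := by rw [hWH]

def anchor [Fintype ι] (H : Matrix (Fin r) ι ℝ) (μ : ℝ) (j : Fin r) : Finset ι :=
  {u | 1 - μ / 2 ≤ H j u}

structure IsNoisyFactorization (A : Matrix (Fin d) ι ℝ) (W : Matrix (Fin d) (Fin r) ℝ)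
    (H : Matrix (Fin r) ι ℝ) (ε : ℝ) : Prop where
  W_nonneg : ∀ i j, 0 ≤ W i j
  l1_W_col : ∀ j, l1 (fun i => W i j) = 1
  H_nonneg : ∀ j u, 0 ≤ H j u
  sum_H_col : ∀ u, ∑ j, H j u = 1
  l1_noise_col_le : ∀ u, l1 (fun i => (A - W * H) i u) ≤ ε

namespace IsNoisyFactorization

variable {A : Matrix (Fin d) ι ℝ} {W : Matrix (Fin d) (Fin r) ℝ} {H : Matrix (Fin r) ι ℝ} {ε : ℝ}

lemma eps_nonneg (hs : IsNoisyFactorization A W H ε) (u : ι) : 0 ≤ ε :=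
  (l1_nonneg _).trans (hs.l1_noise_col_le u)

lemma H_le_one (hs : IsNoisyFactorization A W H ε) (j : Fin r) (u : ι) : H j u ≤ 1 :=
  hs.sum_H_col u ▸ Finset.single_le_sum (fun j _ => hs.H_nonneg j u) (Finset.mem_univ j)

lemma l1_W_mulVec (hs : IsNoisyFactorization A W H ε) {y : Fin r → ℝ}
    (hy : ∀ j, 0 ≤ y j) : l1 (W *ᵥ y) = ∑ j, y j :=
  l1_mulVec_of_nonneg hs.W_nonneg hs.l1_W_col hy

lemma l1_col_le (hs : IsNoisyFactorization A W H ε) (u : ι) :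
    l1 (fun i => A i u) ≤ 1 + ε := by
  have h := l1_add_le (W *ᵥ fun j => H j u) (fun i => (A - W * H) i u)
  rw [hs.l1_W_mulVec (hs.H_nonneg · u), hs.sum_H_col] at h
  have hcol : (fun i => A i u) = fun i => (W *ᵥ fun j => H j u) i + (A - W * H) i u := by
    ext i; simp [Matrix.mul_apply, Matrix.mulVec, dotProduct]
  rw [hcol]
  linarith [hs.l1_noise_col_le u]

lemma l1_col_sub_W_le (hs : IsNoisyFactorization A W H ε) (j : Fin r) (u : ι) :
    l1 (fun i => A i u - W i j) ≤ 2 * (1 - H j u) + ε := by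
  have h := l1_add_le (fun i => (W *ᵥ fun k => H k u) i - W i j) (fun i => (A - W * H) i u)
  have hcol : (fun i => A i u - W i j) =
      fun i => ((W *ᵥ fun k => H k u) i - W i j) + (A - W * H) i u := by
    ext i; simp [Matrix.mul_apply, Matrix.mulVec, dotProduct]
  rw [hcol]
  linarith [l1_mulVec_sub_col_le hs.l1_W_col (hs.H_nonneg · u) (hs.sum_H_col u) j,
    hs.l1_noise_col_le u]

variable [Fintype ι]

lemma sum_H_mulVec (hs : IsNoisyFactorization A W H ε) (x : ι → ℝ) :
    ∑ j, (H *ᵥ x) j = ∑ u, x u := by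
  simp only [Matrix.mulVec, dotProduct]
  rw [Finset.sum_comm]
  simp [← Finset.sum_mul, hs.sum_H_col]

lemma H_mulVec_nonneg (hs : IsNoisyFactorization A W H ε) {x : ι → ℝ} (hx : ∀ u, 0 ≤ x u)
    (j : Fin r) : 0 ≤ (H *ᵥ x) j :=
  Finset.sum_nonneg fun u _ => mul_nonneg (hs.H_nonneg j u) (hx u)

lemma l1_noise_mulVec_le (hs : IsNoisyFactorization A W H ε) {x : ι → ℝ}
    (hx : ∀ u, 0 ≤ x u) : l1 ((A - W * H) *ᵥ x) ≤ ε * ∑ u, x u :=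
  l1_mulVec_le_of_l1_col_le hs.l1_noise_col_le hx

lemma one_sub_mul_sum_le (hs : IsNoisyFactorization A W H ε) {x : ι → ℝ}
    (hx : ∀ u, 0 ≤ x u) : (1 - ε) * ∑ u, x u ≤ l1 (A *ᵥ x) := by
  have h := l1_add_le (A *ᵥ x) (fun i => -((A - W * H) *ᵥ x) i)
  rw [l1_neg] at h
  have hWH : (fun i => (A *ᵥ x) i + -((A - W * H) *ᵥ x) i) = W *ᵥ (H *ᵥ x) := by
    ext i; simp [Matrix.sub_mulVec, Matrix.mulVec_mulVec]
  rw [hWH, hs.l1_W_mulVec (hs.H_mulVec_nonneg hx), hs.sum_H_mulVec] at h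
  linarith [hs.l1_noise_mulVec_le hx]

lemma sum_le_of_residual_le (hs : IsNoisyFactorization A W H ε) (hε : ε ≤ 1 / 17)
    {x : ι → ℝ} (hx : ∀ u, 0 ≤ x u) {v : ι} (hres : l1 (fun i => A i v - (A *ᵥ x) i) ≤ 2 * ε) :
    ∑ u, x u ≤ 1 + 17 / 4 * ε := by
  have hAx : l1 (A *ᵥ x) ≤ 1 + 3 * ε := by
    have h := l1_add_le (fun i => A i v) (fun i => (A *ᵥ x) i - A i v)
    simp only [add_sub_cancel] at h
    rw [l1_sub_comm] at h
    linarith [hs.l1_col_le v]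
  have hlow := hs.one_sub_mul_sum_le hx
  have hε0 := hs.eps_nonneg v
  by_contra! h
  nlinarith [mul_nonneg hε0 (by linarith : 0 ≤ 1 / 17 - ε),
    mul_lt_mul_of_pos_left h (by linarith : 0 < 1 - ε)]


lemma kappa_mul_one_sub_le_of_residual (hs : IsNoisyFactorization A W H ε) {π : Fin r → ι}
    (hπ : H.submatrix id π = 1) {x : ι → ℝ} (hx : ∀ u, 0 ≤ x u) (j : Fin r)
    (hres : l1 (fun i => A i (π j) - (A *ᵥ x) i) ≤ 2 * ε) :
    kappa W * (1 - (H *ᵥ x) j) ≤ 3 * ε + ε * ∑ u, x u := by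
  have hpure : l1 (fun i => W i j - A i (π j)) ≤ ε := by
    have h := hs.l1_noise_col_le (π j)
    rwa [show (fun i => (A - W * H) i (π j)) = fun i => A i (π j) - W i j from
      funext fun i => congrFun (congrFun (submatrix_sub_mul_eq W hπ) i) j, l1_sub_comm] at h
  have hnoise : (fun i => (A *ᵥ x) i - (W *ᵥ (H *ᵥ x)) i) = (A - W * H) *ᵥ x := by
    ext i; simp [Matrix.sub_mulVec, Matrix.mulVec_mulVec]
  have h1 := l1_sub_le_sub_add_sub (fun i => W i j) (fun i => A i (π j)) (W *ᵥ (H *ᵥ x))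
  have h2 := l1_sub_le_sub_add_sub (fun i => A i (π j)) (A *ᵥ x) (W *ᵥ (H *ᵥ x))
  rw [hnoise] at h2
  linarith [kappa_mul_one_sub_le W (hs.H_mulVec_nonneg hx) j, hs.l1_noise_mulVec_le hx]

lemma anchor_pairwiseDisjoint (hs : IsNoisyFactorization A W H ε) {μ : ℝ} (hμ1 : μ < 1) :
    (Set.univ : Set (Fin r)).PairwiseDisjoint (anchor H μ) := by
  intro a _ b _ hab
  refine Finset.disjoint_left.2 fun u ha hb => ?_
  simp only [anchor, Finset.mem_filter, Finset.mem_univ, true_and] at ha hb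
  have hsum : H a u + H b u ≤ 1 := by
    rw [← Finset.sum_pair (f := (H · u)) hab, ← hs.sum_H_col u]
    exact Finset.sum_le_sum_of_subset_of_nonneg (Finset.subset_univ _)
      fun j _ _ => hs.H_nonneg j u
  linarith

lemma l1_sub_W_le_of_mem_FsetC (hs : IsNoisyFactorization A W H ε) {μ : ℝ} {q : ι → ℝ}
    {i : ι} {S : Finset ι} (hS : S ∈ FsetC A μ r q i) {j : Fin r} {u₀ : ι} (hu₀ : u₀ ∈ S)
    (hanc : u₀ ∈ anchor H μ j) (hεμ : ε ≤ μ) {u : ι} (hu : u ∈ S) :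
    l1 (fun k => A k u - W k j) ≤ 8 * μ := by
  have hHu₀ : 1 - μ / 2 ≤ H j u₀ := by simpa [anchor] using hanc
  have h1 := l1_sub_le_sub_add_sub (fun k => A k u) (fun k => A k u₀) (fun k => W k j)
  have h2 := l1_sub_le_sub_add_sub (fun k => A k u) (fun k => A k i) (fun k => A k u₀)
  have h3 := cdist_le_of_mem_FsetC hS hu
  have h4 := cdist_le_of_mem_FsetC hS hu₀
  rw [cdist, ← l1_sub_comm] at h3
  rw [cdist] at h4
  linarith [hs.l1_col_sub_W_le j u₀]

variable [DecidableEq ι]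

lemma feas_pureSolution (hs : IsNoisyFactorization A W H ε) {π : Fin r → ι}
    (hπ : H.submatrix id π = 1) :
    Feas (pureSolution π H) r := by
  have hdiag : ∀ j, H j (π j) = 1 := fun j => by simpa using congrFun (congrFun hπ j) j
  refine ⟨?_, fun u => ?_, fun u v => ?_, fun u v => ?_⟩
  · simp only [Matrix.trace, Matrix.diag, pureSolution_apply]
    rw [Finset.sum_comm]
    simp [hdiag]
  · rw [pureSolution_apply, ← hs.sum_H_col u]
    exact Finset.sum_le_sum fun j _ => by split_ifs <;> simp [hs.H_nonneg]
  · rw [pureSolution_apply]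
    exact Finset.sum_nonneg fun j _ => by split_ifs <;> simp [hs.H_nonneg]
  · rw [pureSolution_apply, pureSolution_apply]
    refine Finset.sum_le_sum fun j _ => ?_
    split_ifs with h
    · rw [h, hdiag]; exact hs.H_le_one j v
    · exact le_rfl

lemma l1_residual_pureSolution_le (hs : IsNoisyFactorization A W H ε) {π : Fin r → ι}
    (hπ : H.submatrix id π = 1)
    (v : ι) : l1 (fun i => (A - A * pureSolution π H) i v) ≤ 2 * ε := by
  have hres : A - A * pureSolution π H = (A - W * H) - (A - W * H).submatrix id π * H := by
    rw [mul_pureSolution, submatrix_sub_mul_eq W hπ, Matrix.sub_mul]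
    abel
  have h := l1_add_le (fun i => (A - W * H) i v)
    (fun i => -((A - W * H).submatrix id π *ᵥ fun j => H j v) i)
  rw [l1_neg] at h
  have hcols : ∀ j, l1 (fun i => (A - W * H).submatrix id π i j) ≤ ε :=
    fun j => hs.l1_noise_col_le (π j)
  have hmul := l1_mulVec_le_of_l1_col_le hcols (hs.H_nonneg · v)
  rw [hs.sum_H_col, mul_one] at hmul
  have hcol : (fun i => (A - A * pureSolution π H) i v) = fun i =>
      (A - W * H) i v + -((A - W * H).submatrix id π *ᵥ fun j => H j v) i := by
    rw [hres]; ext i; simp [Matrix.mul_apply, Matrix.mulVec, dotProduct, sub_eq_add_neg]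
  rw [hcol]
  linarith [hs.l1_noise_col_le v]

lemma l1_residual_le_of_optimal (hs : IsNoisyFactorization A W H ε) {π : Fin r → ι}
    (hπ : H.submatrix id π = 1)
    {X : Matrix ι ι ℝ} (hopt : ∀ Y : Matrix ι ι ℝ, Feas Y r → ml1 (A - A * X) ≤ ml1 (A - A * Y))
    (v : ι) : l1 (fun i => A i v - (A *ᵥ fun u => X u v) i) ≤ 2 * ε := by
  have : Nonempty ι := ⟨v⟩
  exact (l1_col_le_ml1 (A - A * X) v).trans <| (hopt _ (hs.feas_pureSolution hπ)).trans <|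
    ml1_le (hs.l1_residual_pureSolution_le hπ)


lemma le_sum_diag_anchor (hs : IsNoisyFactorization A W H ε) {π : Fin r → ι}
    (hπ : H.submatrix id π = 1) {X : Matrix ι ι ℝ} (hX : Feas X r)
    (hres : ∀ v, l1 (fun i => A i v - (A *ᵥ fun u => X u v) i) ≤ 2 * ε) {μ : ℝ}
    (hκ : 0 < kappa W) (hεμ : 17 * (r + 1) * ε ≤ kappa W * μ) (hμ0 : 0 < μ) (hμ1 : μ < 1)
    (j : Fin r) : (r : ℝ) / (r + 1) ≤ ∑ u ∈ anchor H μ j, X u u := by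
  set κ := kappa W
  set x : ι → ℝ := fun u => X u (π j)
  have hx : ∀ u, 0 ≤ x u := fun u => hX.2.2.1 u (π j)
  have hε0 := hs.eps_nonneg (π j)
  have hκ1 : κ ≤ 1 := kappa_le_one W hs.l1_W_col j
  have hε17 : ε ≤ 1 / 17 := by nlinarith
  have hT := hs.sum_le_of_residual_le hε17 hx (hres (π j))
  have hy := hs.kappa_mul_one_sub_le_of_residual hπ hx j (hres (π j))
  have hsplit : (H *ᵥ x) j ≤ μ / 2 * ∑ u ∈ anchor H μ j, x u + (1 - μ / 2) * ∑ u, x u :=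
    sum_mul_le_add_sum_filter _ (hs.H_le_one j) hx (μ / 2)
  have hdom : ∑ u ∈ anchor H μ j, x u ≤ ∑ u ∈ anchor H μ j, X u u :=
    Finset.sum_le_sum fun u _ => hX.2.2.2 u (π j)
  set T := ∑ u, x u
  set a := ∑ u ∈ anchor H μ j, x u
  set M := ∑ u ∈ anchor H μ j, X u u
  have hκy : κ - 17 / 4 * ε ≤ κ * (H *ᵥ x) j := by nlinarith
  have hκa : κ * (μ / 2) - 17 / 2 * ε ≤ κ * (μ / 2) * a := by
    have h1 : κ * (H *ᵥ x) j ≤ κ * (μ / 2 * a + (1 - μ / 2) * T) :=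
      mul_le_mul_of_nonneg_left hsplit hκ.le
    have h2 : κ * (1 - μ / 2) * T ≤ κ * (1 - μ / 2) * (1 + 17 / 4 * ε) :=
      mul_le_mul_of_nonneg_left hT (mul_nonneg hκ.le (by linarith))
    have h3 : κ * (1 - μ / 2) * ε ≤ ε := by
      nlinarith [mul_le_mul_of_nonneg_right hκ1 (by linarith : 0 ≤ 1 - μ / 2)]
    nlinarith
  have hκM : κ * (μ / 2) - 17 / 2 * ε ≤ κ * (μ / 2) * M :=
    hκa.trans (mul_le_mul_of_nonneg_left hdom (by positivity))
  have hpos : 0 < κ * (μ / 2) := by positivity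
  rw [div_le_iff₀ (by positivity)]
  refine le_of_mul_le_mul_left ?_ hpos
  nlinarith

lemma exists_mem_anchor (hs : IsNoisyFactorization A W H ε) {π : Fin r → ι}
    (hπ : H.submatrix id π = 1) {X : Matrix ι ι ℝ} (hX : Feas X r)
    (hres : ∀ v, l1 (fun i => A i v - (A *ᵥ fun u => X u v) i) ≤ 2 * ε) {μ : ℝ}
    (hκ : 0 < kappa W) (hεμ : 17 * (r + 1) * ε ≤ kappa W * μ) (hμ0 : 0 < μ) (hμ1 : μ < 1)
    {S : Finset ι} (hS : (r : ℝ) / (r + 1) < ∑ u ∈ S, X u u) :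
    ∃ j, ∃ u ∈ S, u ∈ anchor H μ j := by
  by_contra! hout
  set U := Finset.univ.biUnion (anchor H μ)
  have hSU : S ⊆ Finset.univ \ U := fun u hu =>
    Finset.mem_sdiff.2 ⟨Finset.mem_univ u, fun hU => by
      obtain ⟨j, -, hj⟩ := Finset.mem_biUnion.1 hU
      exact hout j u hu hj⟩
  have htrace : ∑ u ∈ Finset.univ \ U, X u u + ∑ u ∈ U, X u u = r := by
    rw [Finset.sum_sdiff (Finset.subset_univ U), ← hX.1]
    rfl
  have hU : (r : ℝ) * (r / (r + 1)) ≤ ∑ u ∈ U, X u u := by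
    rw [Finset.sum_biUnion (by simpa using hs.anchor_pairwiseDisjoint hμ1)]
    simpa using Finset.sum_le_sum fun j (_ : j ∈ Finset.univ) =>
      hs.le_sum_diag_anchor hπ hX hres hκ hεμ hμ0 hμ1 j
  have hrest : ∑ u ∈ S, X u u ≤ ∑ u ∈ Finset.univ \ U, X u u :=
    Finset.sum_le_sum_of_subset_of_nonneg hSU fun u _ _ => hX.2.2.1 u u
  have hfrac : (r : ℝ) - r * (r / (r + 1)) = r / (r + 1) := by
    field_simp
    ring
  linarith

end IsNoisyFactorization

end Separable

lemma fromCols_one_nonneg {r m : ℕ} {Hbar : Matrix (Fin r) (Fin m) ℝ}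
    (hHbar : ∀ i j, 0 ≤ Hbar i j) (j : Fin r) (s : Fin r ⊕ Fin m) :
    0 ≤ Matrix.fromCols 1 Hbar j s := by
  rcases s with k | k
  · rw [Matrix.fromCols_apply_inl, Matrix.one_apply]
    split_ifs <;> norm_num
  · exact hHbar j k

theorem F_decomposition_general
    {d r m : ℕ} (W : Matrix (Fin d) (Fin r) ℝ) (Hbar : Matrix (Fin r) (Fin m) ℝ)
    (σ : Equiv.Perm (Fin r ⊕ Fin m))
    (N A V : Matrix (Fin d) (Fin r ⊕ Fin m) ℝ)
    (H : Matrix (Fin r) (Fin r ⊕ Fin m) ℝ) (ε : ℝ)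
    (hW : ∀ i j, 0 ≤ W i j) (hHbar : ∀ i j, 0 ≤ Hbar i j)
    (hH : H = fun j u => Matrix.fromCols (1 : Matrix (Fin r) (Fin r) ℝ) Hbar j (σ u))
    (hV : V = W * H) (hA : A = V + N)
    (hWcol : ∀ j, l1 (fun i => W i j) = 1)
    (hHcol : ∀ u, l1 (fun j => H j u) = 1)
    (hN : ml1 N ≤ ε)
    (Xopt : Matrix (Fin r ⊕ Fin m) (Fin r ⊕ Fin m) ℝ)
    (hfeas : Feas Xopt r)
    (hopt : ∀ X : Matrix (Fin r ⊕ Fin m) (Fin r ⊕ Fin m) ℝ,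
      Feas X r → ml1 (A - A * Xopt) ≤ ml1 (A - A * X))
    (μ : ℝ)
    (hcase :
      (ε < kappa W * omegaW W / (578 * (r + 1)) ∧
        ∃ ξ : ℝ, 0 < ξ ∧ ξ < kappa W / 35 ∧
          μ = 17 * (r + 1) * ε / kappa W + ξ) ∨
      (ε < (kappa W) ^ 2 / (289 * (r + 1) ^ 2) ∧
        ∃ ξ : ℝ, 0 < ξ ∧ ξ < kappa W / 35 ∧ μ = Real.sqrt ε + ξ))
    (p : Fin r ⊕ Fin m → ℝ) (hp : p = fun u => Xopt u u) :
    (∀ S : Finset (Fin r ⊕ Fin m),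
      (∃ i, S ∈ FsetC A μ r p i) ↔ ∃ j : Fin r, S ∈ FbarC A W μ p j) ∧
    (∀ x y : Fin r, x ≠ y →
      ∀ Sx ∈ FbarC A W μ p x, ∀ Sy ∈ FbarC A W μ p y, ∀ u ∈ Sx, u ∉ Sy) := by
  obtain ⟨hκ, hεμ, hεμ', hμ0, hμ1, hsep⟩ :=
    kappa_regime_bounds hWcol ((ml1_nonneg N).trans hN) hcase
  have hHap : ∀ j u, H j u = Matrix.fromCols 1 Hbar j (σ u) := fun j u => by rw [hH]
  have hH0 : ∀ j u, 0 ≤ H j u := fun j u => hHap j u ▸ fromCols_one_nonneg hHbar j (σ u)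
  have hs : IsNoisyFactorization A W H ε :=
    ⟨hW, hWcol, hH0, fun u => by rw [← hHcol u, l1_of_nonneg (hH0 · u)],
      fun u => by simpa [hA, hV] using (l1_col_le_ml1 N u).trans hN⟩
  have hπ : H.submatrix id (fun j => σ.symm (Sum.inl j)) = 1 := by
    ext i j
    simp [hHap]
  have hres := hs.l1_residual_le_of_optimal hπ hopt
  refine ⟨fun S => ⟨fun ⟨i, hS⟩ => ?_, fun ⟨j, hj⟩ => hj.1⟩, ?_⟩
  · have hscore : (r : ℝ) / (r + 1) < ∑ u ∈ S, Xopt u u := by simpa [scoreS, hp] using hS.2.2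
    obtain ⟨j, u₀, hu₀, hanc⟩ := hs.exists_mem_anchor hπ hfeas hres hκ hεμ hμ0 hμ1 hscore
    exact ⟨j, ⟨i, hS⟩, fun u hu => hs.l1_sub_W_le_of_mem_FsetC hS hu₀ hanc hεμ' hu⟩
  · intro x y hxy Sx hSx Sy hSy u hux huy
    have h := l1_sub_le_sub_add_sub (fun k => W k x) (fun k => A k u) (fun k => W k y)
    linarith [l1_sub_comm (fun k => W k x) (fun k => A k u), hSx.2 u hux, hSy.2 u huy,
      hsep x y hxy]

/-- F = F̄_1 ∪ ⋯ ∪ F̄_r, and clusters from distinct components are disjoint. -/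
theorem F_decomposition
    {d r m : ℕ} (W : Matrix (Fin d) (Fin r) ℝ) (Hbar : Matrix (Fin r) (Fin m) ℝ)
    (σ : Equiv.Perm (Fin r ⊕ Fin m))
    (N A V : Matrix (Fin d) (Fin r ⊕ Fin m) ℝ)
    (H : Matrix (Fin r) (Fin r ⊕ Fin m) ℝ) (ε : ℝ)
    (hW : ∀ i j, 0 ≤ W i j) (hHbar : ∀ i j, 0 ≤ Hbar i j)
    (hH : H = fun j u => Matrix.fromCols (1 : Matrix (Fin r) (Fin r) ℝ) Hbar j (σ u))
    (hV : V = W * H) (hA : A = V + N)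
    (hVcol : ∀ u, l1 (fun i => V i u) = 1)
    (hWcol : ∀ j, l1 (fun i => W i j) = 1)
    (hHcol : ∀ u, l1 (fun j => H j u) = 1)
    (hε0 : 0 ≤ ε) (hN : ml1 N ≤ ε)
    (Xopt : Matrix (Fin r ⊕ Fin m) (Fin r ⊕ Fin m) ℝ)
    (hfeas : Feas Xopt r)
    (hopt : ∀ X : Matrix (Fin r ⊕ Fin m) (Fin r ⊕ Fin m) ℝ,
      Feas X r → ml1 (A - A * Xopt) ≤ ml1 (A - A * X))
    (μ : ℝ)
    (hcase :
      (ε < kappa W * omegaW W / (578 * (r + 1)) ∧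
        ∃ ξ : ℝ, 0 < ξ ∧ ξ < kappa W / 35 ∧
          μ = 17 * (r + 1) * ε / kappa W + ξ) ∨
      (ε < (kappa W) ^ 2 / (289 * (r + 1) ^ 2) ∧
        ∃ ξ : ℝ, 0 < ξ ∧ ξ < kappa W / 35 ∧ μ = Real.sqrt ε + ξ))
    (p : Fin r ⊕ Fin m → ℝ) (hp : p = fun u => Xopt u u) :
    (∀ S : Finset (Fin r ⊕ Fin m),
      (∃ i, S ∈ FsetC A μ r p i) ↔ ∃ j : Fin r, S ∈ FbarC A W μ p j) ∧
    (∀ x y : Fin r, x ≠ y →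
      ∀ Sx ∈ FbarC A W μ p x, ∀ Sy ∈ FbarC A W μ p y, ∀ u ∈ Sx, u ∉ Sy) :=
  F_decomposition_general W Hbar σ N A V H ε hW hHbar hH hV hA hWcol hHcol hN Xopt hfeas hopt μ
    hcase p hp
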